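/- arXiv:2303.04609 — 5 statements merged into one kernel-verified Lean document; each statement's English description precedes it below -/
import Mathlib

section
/- For integers m1 ≥ m2 ≥ 1 and 0 ≤ k ≤ m2 with m1 ≥ 1, the probability that the random variable W_{m1,m2} equals k is (2^k * C(m1+m2-k, m1) - 2^{k+1} * C(m1+m2-k-1, m1)) / C(m1+m2, m1), and these probabilities sum to 1 over k from 0 to m2. -/
open Finset

theorem stmt_0 (m1 m2 : ℕ) (h1 : 1 ≤ m2) (h2 : m2 ≤ m1) :
    (∑ k ∈ Finset.range (m2 + 1),
        (((2 ^ k * Nat.choose (m1 + m2 - k) m1 : ℤ)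
          - 2 ^ (k + 1) * Nat.choose (m1 + m2 - k - 1) m1 : ℤ) : ℚ)
          / (Nat.choose (m1 + m2) m1 : ℚ) = 1)
    ∧ (∑ k ∈ Finset.range (m2 + 1),
        ((2 ^ k * Nat.choose (m1 + m2 - k) m1 : ℤ)
          - 2 ^ (k + 1) * Nat.choose (m1 + m2 - k - 1) m1)
        = (Nat.choose (m1 + m2) m1 : ℤ)) := by
  set f : ℕ → ℤ := fun k => (2 ^ k * Nat.choose (m1 + m2 - k) m1 : ℤ) with hf
  have key : (∑ k ∈ Finset.range (m2 + 1),
        ((2 ^ k * Nat.choose (m1 + m2 - k) m1 : ℤ)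
          - 2 ^ (k + 1) * Nat.choose (m1 + m2 - k - 1) m1)
        = (Nat.choose (m1 + m2) m1 : ℤ)) := by
    have hsum : ∑ k ∈ Finset.range (m2 + 1),
        ((2 ^ k * Nat.choose (m1 + m2 - k) m1 : ℤ)
          - 2 ^ (k + 1) * Nat.choose (m1 + m2 - k - 1) m1)
        = ∑ k ∈ Finset.range (m2 + 1), (f k - f (k + 1)) := by
      refine Finset.sum_congr rfl fun k _ => ?_
      simp only [hf]
      rw [show m1 + m2 - (k + 1) = m1 + m2 - k - 1 by omega]
    rw [hsum, Finset.sum_range_sub' f (m2 + 1)]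
    have h0 : f 0 = (Nat.choose (m1 + m2) m1 : ℤ) := by simp [hf]
    have h1' : f (m2 + 1) = 0 := by
      simp only [hf]
      rw [show m1 + m2 - (m2 + 1) = m1 - 1 by omega,
        Nat.choose_eq_zero_of_lt (by omega)]
      simp
    rw [h0, h1', sub_zero]
  refine ⟨?_, key⟩
  have hD : (Nat.choose (m1 + m2) m1 : ℚ) ≠ 0 := by
    exact_mod_cast (Nat.choose_pos (by omega)).ne'
  rw [← Finset.sum_div, div_eq_one_iff_eq hD]
  exact_mod_cast key
end

section
/- For integers m1 ≥ m2 ≥ b+r ≥ b ≥ a ≥ 0, the coefficient of z^{m1-a} y^{m2-b} in P(zy)^r / (1-y-z) equals C(m1+m2-a-b-r, m1-a), where P(q) = (1-√(1-4q))/2 is the shifted Catalan generating function. -/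
/-- The shifted Catalan generating function
`P(q) = Σ_{n≥1} (1/n) C(2n-2, n-1) q^n`. -/
noncomputable def catalanShifted : PowerSeries ℚ :=
  PowerSeries.mk fun n => if n = 0 then 0 else (Nat.choose (2 * n - 2) (n - 1) : ℚ) / n

/-- The bivariate power series `P(z·y)`, with variable `0` for `z` and `1` for `y`. -/
noncomputable def Pzy : MvPowerSeries (Fin 2) ℚ :=
  fun d => if d 0 = d 1 then PowerSeries.coeff (d 0) catalanShifted else 0

/-- The bivariate power series `1/(1-y-z) = Σ_{i,j≥0} C(i+j,i) z^i y^j`. -/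
noncomputable def invOneSubYZ : MvPowerSeries (Fin 2) ℚ :=
  fun d => (Nat.choose (d 0 + d 1) (d 0) : ℚ)

/-!
Write `c r i j` for the coefficient of `z^i y^j` in `P(zy)^r / (1-y-z)`. Viewing `P(zy)` and
`1/(1-y-z)` as the substitutions of `zy` and `z + y` into `P` and `1/(1-q)` transports the
one-variable identities `P = q + P²` (that is, `Cat = 1 + q Cat²` for the Catalan series
`Cat = P / q`) and `(1-q) · 1/(1-q) = 1`. Multiplying by `1-y-z` gives
`c r (i+1) (j+1) = c r i (j+1) + c r (i+1) j` off the diagonal, since `P(zy)^r` only has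
diagonal terms, while `P(zy)^(r+1) = zy P(zy)^r + P(zy)^(r+2)` gives
`c (r+1) (i+1) (i+1) = c r i i + c (r+2) (i+1) (i+1)`. Together with `c 0 i j = C(i+j, i)` and
`c r i j = 0` for `j < r` (as `y^r ∣ P(zy)^r`), these recursions are solved by
`C(i+j-r, i)` whenever `r ≤ j ≤ i`, by induction on `2(i+j) + (j-r)`.
-/

open PowerSeries (catalanSeries)
open MvPowerSeries (coeff)
open Finsupp (single)

lemma catalanShifted_eq_X_mul :
    catalanShifted = PowerSeries.X * PowerSeries.map (Nat.castRingHom ℚ) catalanSeries := by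
  ext (_ | n)
  · simp [catalanShifted]
  · have h := succ_mul_catalan_eq_centralBinom n
    rw [Nat.centralBinom, two_mul] at h
    simp only [catalanShifted, PowerSeries.coeff_mk, PowerSeries.coeff_succ_X_mul,
      PowerSeries.coeff_map, PowerSeries.catalanSeries_coeff]
    rw [if_neg n.succ_ne_zero, show 2 * (n + 1) - 2 = n + n by omega, Nat.add_sub_cancel, ← h]
    push_cast
    field_simp

lemma catalanShifted_eq_X_add_sq : catalanShifted = PowerSeries.X + catalanShifted ^ 2 := by
  have h := congrArg (PowerSeries.map (Nat.castRingHom ℚ))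
    PowerSeries.catalanSeries_sq_mul_X_add_one
  simp only [map_add, map_mul, map_pow, map_one, PowerSeries.map_X] at h
  rw [catalanShifted_eq_X_mul]
  linear_combination (-PowerSeries.X) * h

section Substitution

variable {R : Type*} [CommRing R]

local notation "X₀" => (MvPowerSeries.X 0 : MvPowerSeries (Fin 2) R)
local notation "X₁" => (MvPowerSeries.X 1 : MvPowerSeries (Fin 2) R)

lemma PowerSeries.HasSubst.X_zero_mul_X_one : PowerSeries.HasSubst (X₀ * X₁) :=
  (PowerSeries.HasSubst.X 0).mul_left

lemma PowerSeries.coeff_subst_X_zero_mul_X_one (f : PowerSeries R) (e : Fin 2 →₀ ℕ) :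
    MvPowerSeries.coeff e (PowerSeries.subst (X₀ * X₁) f) =
      if e 0 = e 1 then PowerSeries.coeff (e 0) f else 0 := by
  have hpow (d : ℕ) : (X₀ * X₁) ^ d = MvPowerSeries.monomial (single 0 d + single 1 d) 1 := by
    rw [mul_pow, MvPowerSeries.X_pow_eq, MvPowerSeries.X_pow_eq,
      MvPowerSeries.monomial_mul_monomial, mul_one]
  have hsplit (a b : ℕ) : e = single 0 a + single 1 b ↔ e 0 = a ∧ e 1 = b := by
    constructor
    · rintro rfl
      simp
    · rintro ⟨rfl, rfl⟩
      ext k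
      fin_cases k <;> simp
  simp only [PowerSeries.coeff_subst PowerSeries.HasSubst.X_zero_mul_X_one, hpow,
    MvPowerSeries.coeff_monomial, smul_eq_mul, mul_ite, mul_one, mul_zero]
  rw [finsum_eq_single _ (e 0) fun d hd => if_neg fun h => hd ((hsplit d d).1 h).1.symm]
  simp only [hsplit, true_and, eq_comm]

end Substitution

lemma MvPowerSeries.coeff_single_add_X_mul {σ R : Type*} [Semiring R]
    (s : σ) (e : σ →₀ ℕ) (φ : MvPowerSeries σ R) :
    coeff (single s 1 + e) (MvPowerSeries.X s * φ) = coeff e φ := by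
  rw [MvPowerSeries.X_def, MvPowerSeries.coeff_add_monomial_mul, one_mul]

local notation "X₀" => (MvPowerSeries.X 0 : MvPowerSeries (Fin 2) ℚ)
local notation "X₁" => (MvPowerSeries.X 1 : MvPowerSeries (Fin 2) ℚ)

lemma coeff_X_zero_mul (i j : ℕ) (φ : MvPowerSeries (Fin 2) ℚ) :
    coeff (single 0 (i + 1) + single 1 j) (X₀ * φ) = coeff (single 0 i + single 1 j) φ := by
  rw [add_comm i, Finsupp.single_add, add_assoc, MvPowerSeries.coeff_single_add_X_mul]

lemma coeff_X_one_mul (i j : ℕ) (φ : MvPowerSeries (Fin 2) ℚ) :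
    coeff (single 0 i + single 1 (j + 1)) (X₁ * φ) = coeff (single 0 i + single 1 j) φ := by
  rw [add_comm j, Finsupp.single_add, add_left_comm, MvPowerSeries.coeff_single_add_X_mul]

lemma Pzy_eq_subst : Pzy = PowerSeries.subst (X₀ * X₁) catalanShifted := by
  ext e
  rw [PowerSeries.coeff_subst_X_zero_mul_X_one]
  rfl

lemma invOneSubYZ_eq_subst :
    invOneSubYZ = PowerSeries.subst (X₀ + X₁) (PowerSeries.mk (1 : ℕ → ℚ)) := by
  ext e
  rw [PowerSeries.coeff_subst_X_zero_add_X_one, PowerSeries.coeff_mk, Pi.one_apply, mul_one]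
  rfl

lemma coeff_invOneSubYZ (i j : ℕ) :
    coeff (single 0 i + single 1 j) invOneSubYZ = (i + j).choose i := by
  change ((Nat.choose (_ + _) _ : ℕ) : ℚ) = _
  simp

lemma Pzy_eq_X_zero_mul_X_one_add_sq : Pzy = X₀ * X₁ + Pzy ^ 2 := by
  have h := congrArg (PowerSeries.subst (X₀ * X₁)) catalanShifted_eq_X_add_sq
  rwa [← PowerSeries.coe_substAlgHom PowerSeries.HasSubst.X_zero_mul_X_one, map_add, map_pow,
    PowerSeries.substAlgHom_X, PowerSeries.coe_substAlgHom, ← Pzy_eq_subst] at h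

lemma invOneSubYZ_mul_one_sub : invOneSubYZ * (1 - (X₀ + X₁)) = 1 := by
  have hs : PowerSeries.HasSubst (X₀ + X₁) :=
    (PowerSeries.HasSubst.X 0).add (PowerSeries.HasSubst.X 1)
  have h := congrArg (PowerSeries.substAlgHom hs) (PowerSeries.mk_one_mul_one_sub_eq_one ℚ)
  rwa [map_mul, map_sub, map_one, PowerSeries.substAlgHom_X, PowerSeries.coe_substAlgHom,
    ← invOneSubYZ_eq_subst] at h

lemma coeff_Pzy_pow_of_ne {i j : ℕ} (hij : i ≠ j) (r : ℕ) :
    coeff (single 0 i + single 1 j) (Pzy ^ r) = 0 := by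
  rw [Pzy_eq_subst, ← PowerSeries.subst_pow PowerSeries.HasSubst.X_zero_mul_X_one,
    PowerSeries.coeff_subst_X_zero_mul_X_one]
  simp [hij]

lemma X_one_dvd_Pzy : X₁ ∣ Pzy := by
  refine MvPowerSeries.X_dvd_iff.2 fun m hm => ?_
  change (if m 0 = m 1 then PowerSeries.coeff (m 0) catalanShifted else 0) = 0
  split_ifs with h
  · simp [h, hm, catalanShifted]
  · rfl

lemma coeff_Pzy_pow_mul_of_lt {i j r : ℕ} (hjr : j < r) (φ : MvPowerSeries (Fin 2) ℚ) :
    coeff (single 0 i + single 1 j) (Pzy ^ r * φ) = 0 :=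
  MvPowerSeries.X_pow_dvd_iff.1 ((pow_dvd_pow_of_dvd X_one_dvd_Pzy r).mul_right φ) _
    (by simpa using hjr)

lemma coeff_mul_invOneSubYZ_succ_succ (i j : ℕ) (φ : MvPowerSeries (Fin 2) ℚ) :
    coeff (single 0 (i + 1) + single 1 (j + 1)) (φ * invOneSubYZ) =
      coeff (single 0 (i + 1) + single 1 (j + 1)) φ +
      coeff (single 0 i + single 1 (j + 1)) (φ * invOneSubYZ) +
      coeff (single 0 (i + 1) + single 1 j) (φ * invOneSubYZ) := by
  have h : φ * invOneSubYZ = φ + X₀ * (φ * invOneSubYZ) + X₁ * (φ * invOneSubYZ) := by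
    linear_combination φ * invOneSubYZ_mul_one_sub
  conv_lhs => rw [h]
  rw [map_add, map_add, coeff_X_zero_mul, coeff_X_one_mul]

lemma coeff_Pzy_pow_succ_mul_succ_succ (i r : ℕ) (φ : MvPowerSeries (Fin 2) ℚ) :
    coeff (single 0 (i + 1) + single 1 (i + 1)) (Pzy ^ (r + 1) * φ) =
      coeff (single 0 i + single 1 i) (Pzy ^ r * φ) +
      coeff (single 0 (i + 1) + single 1 (i + 1)) (Pzy ^ (r + 2) * φ) := by
  have h : Pzy ^ (r + 1) * φ = X₀ * (X₁ * (Pzy ^ r * φ)) + Pzy ^ (r + 2) * φ := by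
    linear_combination (Pzy ^ r * φ) * Pzy_eq_X_zero_mul_X_one_add_sq
  rw [h, map_add, coeff_X_zero_mul, coeff_X_one_mul]

theorem coeff_Pzy_pow_mul_invOneSubYZ {r i j : ℕ} (hrj : r ≤ j) (hji : j ≤ i) :
    coeff (single 0 i + single 1 j) (Pzy ^ r * invOneSubYZ) = (i + j - r).choose i := by
  rcases Nat.eq_zero_or_pos r with rfl | hr
  · rw [pow_zero, one_mul, coeff_invOneSubYZ, Nat.sub_zero]
  obtain ⟨s, rfl⟩ : ∃ s, r = s + 1 := ⟨r - 1, by omega⟩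
  obtain ⟨j, rfl⟩ : ∃ j', j = j' + 1 := ⟨j - 1, by omega⟩
  obtain ⟨i, rfl⟩ : ∃ i', i = i' + 1 := ⟨i - 1, by omega⟩
  rcases hji.lt_or_eq with hlt | heq
  · have hlast : coeff (single 0 (i + 1) + single 1 j) (Pzy ^ (s + 1) * invOneSubYZ) =
        (i + (j + 1) - (s + 1)).choose (i + 1) := by
      by_cases hsj : s + 1 ≤ j
      · rw [coeff_Pzy_pow_mul_invOneSubYZ hsj (by omega)]
        congr 2
        omega
      · rw [coeff_Pzy_pow_mul_of_lt (by omega), Nat.choose_eq_zero_of_lt (by omega), Nat.cast_zero]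
    rw [coeff_mul_invOneSubYZ_succ_succ, coeff_Pzy_pow_of_ne (by omega), zero_add,
      coeff_Pzy_pow_mul_invOneSubYZ hrj (by omega), hlast,
      show i + 1 + (j + 1) - (s + 1) = i + (j + 1) - (s + 1) + 1 by omega,
      Nat.choose_succ_succ', Nat.cast_add]
  · obtain rfl : j = i := by omega
    have hlast : coeff (single 0 (j + 1) + single 1 (j + 1)) (Pzy ^ (s + 2) * invOneSubYZ) =
        (j + j - s).choose (j + 1) := by
      by_cases hsj : s + 2 ≤ j + 1
      · rw [coeff_Pzy_pow_mul_invOneSubYZ hsj le_rfl]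
        congr 2
        omega
      · rw [coeff_Pzy_pow_mul_of_lt (by omega), Nat.choose_eq_zero_of_lt (by omega), Nat.cast_zero]
    rw [coeff_Pzy_pow_succ_mul_succ_succ, coeff_Pzy_pow_mul_invOneSubYZ (by omega) le_rfl, hlast,
      show j + 1 + (j + 1) - (s + 1) = j + j - s + 1 by omega, Nat.choose_succ_succ', Nat.cast_add]
termination_by 2 * (i + j) + (j - r)

theorem stmt_7_general (m1 m2 a b r : ℕ)
    (h1 : a ≤ b) (h3 : b + r ≤ m2) (h4 : m2 ≤ m1) :
    MvPowerSeries.coeff (Finsupp.single 0 (m1 - a) + Finsupp.single 1 (m2 - b))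
        (Pzy ^ r * invOneSubYZ)
      = Nat.choose (m1 + m2 - a - b - r) (m1 - a) := by
  rw [coeff_Pzy_pow_mul_invOneSubYZ (by omega) (by omega)]
  congr 2
  omega

theorem stmt_7 (m1 m2 a b r : ℕ)
    (h1 : a ≤ b) (h2 : b ≤ b + r) (h3 : b + r ≤ m2) (h4 : m2 ≤ m1) :
    MvPowerSeries.coeff (Finsupp.single 0 (m1 - a) + Finsupp.single 1 (m2 - b))
        (Pzy ^ r * invOneSubYZ)
      = Nat.choose (m1 + m2 - a - b - r) (m1 - a) :=
  stmt_7_general m1 m2 a b r h1 h3 h4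
end

section
/- For integers m1 ≥ m2 ≥ 1, 1 ≤ ℓ ≤ m1, 0 ≤ k ≤ m2 with (m1,m2) ≠ (ℓ,k), the cumulative probability P{W_{m1,m2} ≤ k ∧ T_{m1,m2} ≤ ℓ} equals 1 - (C(m1+m2-ℓ-1, m2) + C(m1+m2-ℓ-1, m1) + 2^{k+1} C(m1+m2-k-1, m1) - 2^{k+1} C(m1+m2-k-ℓ-1, m1)) / C(m1+m2, m1), where the joint probability mass function is as in the exact joint distribution of (W,T). -/
open Finset

lemma lemA (a r k : ℕ) :
    ∑ i ∈ Finset.Icc 1 k,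
      ((2 ^ i * Nat.choose (a - i) r : ℤ) - 2 ^ (i + 1) * Nat.choose (a - i - 1) r)
    = 2 * Nat.choose (a - 1) r - 2 ^ (k + 1) * Nat.choose (a - k - 1) r := by
  induction k with
  | zero => simp
  | succ k ih =>
    rw [Finset.sum_Icc_succ_top (by omega), ih]
    have h1 : a - k - 1 = a - (k + 1) := by omega
    rw [h1]
    ring

lemma lemB (a m : ℕ) (hm : 1 ≤ m) : ∀ ℓ, ℓ ≤ a →
    ∑ j ∈ Finset.Icc 1 ℓ, (Nat.choose (a - j) (m - 1) : ℤ)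
    = Nat.choose a m - Nat.choose (a - ℓ) m := by
  intro ℓ
  induction ℓ with
  | zero => simp
  | succ ℓ ih =>
    intro hℓ
    rw [Finset.sum_Icc_succ_top (by omega), ih (by omega)]
    have h1 : a - ℓ = (a - (ℓ + 1)) + 1 := by omega
    have h2 : m = (m - 1) + 1 := by omega
    have h3 : Nat.choose (a - ℓ) m
        = Nat.choose (a - (ℓ+1)) (m-1) + Nat.choose (a - (ℓ+1)) m := by
      rw [h1]
      conv_lhs => rw [h2]
      rw [Nat.choose_succ_succ]
      rw [Nat.succ_eq_add_one, ← h2]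
    rw [h3]
    push_cast
    ring

theorem stmt_9 (m1 m2 k ℓ : ℕ) (h1 : 1 ≤ m2) (h2 : m2 ≤ m1)
    (hℓ1 : 1 ≤ ℓ) (hℓ2 : ℓ ≤ m1) (hk : k ≤ m2) (hnd : (m1, m2) ≠ (ℓ, k)) :
    ∑ j ∈ Finset.Icc 1 ℓ,
        (((Nat.choose (m1 + m2 - j - 1) (m2 - 1) : ℤ)
            - Nat.choose (m1 + m2 - j - 1) (m1 - 1))
          + ∑ i ∈ Finset.Icc 1 k,
              ((2 ^ i * Nat.choose (m1 + m2 - j - i) (m1 - 1) : ℤ)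
                - 2 ^ (i + 1) * Nat.choose (m1 + m2 - j - i - 1) (m1 - 1)))
      = (Nat.choose (m1 + m2) m1 : ℤ)
          - Nat.choose (m1 + m2 - ℓ - 1) m2
          - Nat.choose (m1 + m2 - ℓ - 1) m1
          - 2 ^ (k + 1) * Nat.choose (m1 + m2 - k - 1) m1
          + 2 ^ (k + 1) * Nat.choose (m1 + m2 - k - ℓ - 1) m1 := by
  have hne : m1 ≠ ℓ ∨ m2 ≠ k := by
    by_contra h
    push_neg at h
    exact hnd (by rw [h.1, h.2])
  have key : ∀ j ∈ Finset.Icc 1 ℓ,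
      (((Nat.choose (m1 + m2 - j - 1) (m2 - 1) : ℤ)
            - Nat.choose (m1 + m2 - j - 1) (m1 - 1))
          + ∑ i ∈ Finset.Icc 1 k,
              ((2 ^ i * Nat.choose (m1 + m2 - j - i) (m1 - 1) : ℤ)
                - 2 ^ (i + 1) * Nat.choose (m1 + m2 - j - i - 1) (m1 - 1)))
      = ((Nat.choose (m1 + m2 - 1 - j) (m2 - 1) : ℤ)
          + Nat.choose (m1 + m2 - 1 - j) (m1 - 1))
        - 2 ^ (k + 1) * Nat.choose (m1 + m2 - k - 1 - j) (m1 - 1) := by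
    intro j hj
    rw [lemA (m1 + m2 - j) (m1 - 1) k]
    have e1 : m1 + m2 - j - 1 = m1 + m2 - 1 - j := by omega
    have e2 : m1 + m2 - j - k - 1 = m1 + m2 - k - 1 - j := by omega
    rw [e1, e2]
    ring
  rw [Finset.sum_congr rfl key]
  have split : ∑ j ∈ Finset.Icc 1 ℓ,
      (((Nat.choose (m1 + m2 - 1 - j) (m2 - 1) : ℤ)
          + Nat.choose (m1 + m2 - 1 - j) (m1 - 1))
        - 2 ^ (k + 1) * Nat.choose (m1 + m2 - k - 1 - j) (m1 - 1))
      = (∑ j ∈ Finset.Icc 1 ℓ, (Nat.choose (m1 + m2 - 1 - j) (m2 - 1) : ℤ))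
        + (∑ j ∈ Finset.Icc 1 ℓ, (Nat.choose (m1 + m2 - 1 - j) (m1 - 1) : ℤ))
        - 2 ^ (k + 1) * ∑ j ∈ Finset.Icc 1 ℓ, (Nat.choose (m1 + m2 - k - 1 - j) (m1 - 1) : ℤ) := by
    rw [← Finset.sum_add_distrib, Finset.mul_sum, ← Finset.sum_sub_distrib]
  rw [split,
    lemB (m1 + m2 - 1) m2 h1 ℓ (by omega),
    lemB (m1 + m2 - 1) m1 (by omega) ℓ (by omega),
    lemB (m1 + m2 - k - 1) m1 (by omega) ℓ (by omega)]
  have pascal : Nat.choose (m1 + m2) m1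
      = Nat.choose (m1 + m2 - 1) m2 + Nat.choose (m1 + m2 - 1) m1 := by
    have hsym : Nat.choose (m1 + m2 - 1) m2 = Nat.choose (m1 + m2 - 1) (m1 - 1) := by
      have hs := Nat.choose_symm (n := m1 + m2 - 1) (k := m1 - 1) (by omega)
      have e : (m1 + m2 - 1) - (m1 - 1) = m2 := by omega
      rw [e] at hs
      exact hs
    rw [hsym]
    have e1 : m1 + m2 = (m1 + m2 - 1) + 1 := by omega
    have e2 : m1 = (m1 - 1) + 1 := by omega
    conv_lhs => rw [e1, e2]
    rw [Nat.choose_succ_succ, Nat.succ_eq_add_one, ← e2]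
  have e3 : m1 + m2 - 1 - ℓ = m1 + m2 - ℓ - 1 := by omega
  have e4 : m1 + m2 - k - 1 - ℓ = m1 + m2 - k - ℓ - 1 := by omega
  rw [e3, e4, pascal]
  push_cast
  ring
end

section
/- Fix 0 < ρ < 1 and let (X̂, Ŷ) be a pair of ℕ-valued random variables with joint pmf p̂_{0,ℓ} = (ρ-ρ^ℓ)/(1+ρ)^{ℓ+1} (ℓ≥1), p̂_{k,ℓ} = ((1-ρ)/(ρ(1+ρ)))(ρ/(1+ρ))^ℓ (2ρ/(1+ρ))^k (k,ℓ≥1). Then E[X̂] = 2ρ/(1-ρ), E[Ŷ] = (ρ²+1)/ρ, E[X̂Ŷ] = 2ρ(1+ρ)/(1-ρ), and hence Cov(X̂,Ŷ) = E[X̂Ŷ] - E[X̂]E[Ŷ] = -2, independent of ρ. -/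
open Finset

/-- shifted geometric series -/
lemma geom_shift {r : ℝ} (h0 : 0 ≤ r) (h1 : r < 1) :
    HasSum (fun n : ℕ => r ^ (n + 1)) (r / (1 - r)) := by
  have := (hasSum_geometric_of_lt_one h0 h1).mul_left r
  simpa [pow_succ, mul_comm, div_eq_mul_inv] using this

/-- shifted `n * r^n` series -/
lemma geom_shift' {r : ℝ} (h0 : 0 ≤ r) (h1 : r < 1) :
    HasSum (fun n : ℕ => ((n : ℝ) + 1) * r ^ (n + 1)) (r / (1 - r) ^ 2) := by
  have hr : ‖r‖ < 1 := by rwa [Real.norm_eq_abs, abs_of_nonneg h0]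
  have h := hasSum_coe_mul_geometric_of_norm_lt_one (𝕜 := ℝ) hr
  have h2 := (hasSum_nat_add_iff' (f := fun n : ℕ => (n : ℝ) * r ^ n) 1).2 h
  simpa using h2.congr_fun (fun n => by push_cast; ring)

/-- The limiting joint pmf of `(W, T)` in the central regime `m2 ~ ρ m1`:
`p̂_{0,ℓ} = (ρ-ρ^ℓ)/(1+ρ)^{ℓ+1}` for `ℓ ≥ 1`,
`p̂_{k,ℓ} = ((1-ρ)/(ρ(1+ρ)))(ρ/(1+ρ))^ℓ(2ρ/(1+ρ))^k` for `k,ℓ ≥ 1`, and `0` otherwise. -/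
noncomputable def phat (ρ : ℝ) : ℕ → ℕ → ℝ
  | _, 0 => 0
  | 0, ℓ => (ρ - ρ ^ ℓ) / (1 + ρ) ^ (ℓ + 1)
  | (k + 1), ℓ => (1 - ρ) / (ρ * (1 + ρ)) * (ρ / (1 + ρ)) ^ ℓ * (2 * ρ / (1 + ρ)) ^ (k + 1)

theorem stmt_11 (ρ : ℝ) (h0 : 0 < ρ) (h1 : ρ < 1) :
    (∑' k : ℕ, ∑' ℓ : ℕ, (k : ℝ) * phat ρ k ℓ) = 2 * ρ / (1 - ρ) ∧
    (∑' k : ℕ, ∑' ℓ : ℕ, (ℓ : ℝ) * phat ρ k ℓ) = (ρ ^ 2 + 1) / ρ ∧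
    (∑' k : ℕ, ∑' ℓ : ℕ, (k : ℝ) * (ℓ : ℝ) * phat ρ k ℓ) = 2 * ρ * (1 + ρ) / (1 - ρ) ∧
    (∑' k : ℕ, ∑' ℓ : ℕ, (k : ℝ) * (ℓ : ℝ) * phat ρ k ℓ)
      - (∑' k : ℕ, ∑' ℓ : ℕ, (k : ℝ) * phat ρ k ℓ)
        * (∑' k : ℕ, ∑' ℓ : ℕ, (ℓ : ℝ) * phat ρ k ℓ) = -2 := by
  have hρ1 : (0:ℝ) < 1 + ρ := by linarith
  have hρ1' : (1:ℝ) + ρ ≠ 0 := ne_of_gt hρ1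
  have hρ : ρ ≠ 0 := ne_of_gt h0
  have h1ρ : (1:ℝ) - ρ ≠ 0 := by intro h; linarith [h]; 
  set a : ℝ := ρ / (1 + ρ) with ha
  set b : ℝ := 2 * ρ / (1 + ρ) with hb
  set u : ℝ := 1 / (1 + ρ) with hu
  have ha0 : 0 ≤ a := by rw [ha]; positivity
  have ha1 : a < 1 := by rw [ha, div_lt_one hρ1]; linarith
  have hb0 : 0 ≤ b := by rw [hb]; positivity
  have hb1 : b < 1 := by rw [hb, div_lt_one hρ1]; linarith
  have hu0 : 0 ≤ u := by rw [hu]; positivity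
  have hu1 : u < 1 := by rw [hu, div_lt_one hρ1]; linarith
  have h1a : 1 - a = 1 / (1 + ρ) := by
    rw [ha, eq_div_iff hρ1', sub_mul, div_mul_cancel₀ _ hρ1']; ring
  have h1b : 1 - b = (1 - ρ) / (1 + ρ) := by
    rw [hb, eq_div_iff hρ1', sub_mul, div_mul_cancel₀ _ hρ1']; ring
  have h1u : 1 - u = ρ / (1 + ρ) := by
    rw [hu, eq_div_iff hρ1', sub_mul, div_mul_cancel₀ _ hρ1']; ring
  -- rows for k+1
  have row1 : ∀ k : ℕ, HasSum (fun ℓ : ℕ => phat ρ (k+1) ℓ)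
      ((1 - ρ) / (1 + ρ) * b ^ (k+1)) := by
    intro k
    have h := (geom_shift ha0 ha1).mul_left ((1 - ρ) / (ρ * (1 + ρ)) * b ^ (k+1))
    have h2 := (hasSum_nat_add_iff (f := fun ℓ : ℕ => phat ρ (k+1) ℓ) 1).1
      (h.congr_fun (fun ℓ => by
        show phat ρ (k+1) (ℓ+1) = _
        simp only [phat, ha, hb]; ring))
    have hv : (1 - ρ) / (ρ * (1 + ρ)) * b ^ (k + 1) * (a / (1 - a))
        = (1 - ρ) / (1 + ρ) * b ^ (k+1) := by
      rw [h1a, ha]; field_simp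
    simpa [phat, hv] using h2
  -- rows for k+1 weighted by ℓ
  have row1y : ∀ k : ℕ, HasSum (fun ℓ : ℕ => (ℓ : ℝ) * phat ρ (k+1) ℓ)
      ((1 - ρ) * b ^ (k+1)) := by
    intro k
    have h := (geom_shift' ha0 ha1).mul_left ((1 - ρ) / (ρ * (1 + ρ)) * b ^ (k+1))
    have h2 := (hasSum_nat_add_iff (f := fun ℓ : ℕ => (ℓ : ℝ) * phat ρ (k+1) ℓ) 1).1
      (h.congr_fun (fun ℓ => by
        show ((ℓ+1 : ℕ) : ℝ) * phat ρ (k+1) (ℓ+1) = _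
        simp only [phat, ha, hb]; push_cast; ring))
    have hv : (1 - ρ) / (ρ * (1 + ρ)) * b ^ (k + 1) * (a / (1 - a) ^ 2)
        = (1 - ρ) * b ^ (k+1) := by
      rw [h1a, ha]; field_simp
    simpa [phat, hv] using h2
  -- row for k = 0 weighted by ℓ
  have row0y : HasSum (fun ℓ : ℕ => (ℓ : ℝ) * phat ρ 0 ℓ) (1 / ρ - ρ) := by
    have hA := (geom_shift' hu0 hu1).mul_left (ρ * u)
    have hB := (geom_shift' ha0 ha1).mul_left u
    have h := hA.sub hB
    have h2 := (hasSum_nat_add_iff (f := fun ℓ : ℕ => (ℓ : ℝ) * phat ρ 0 ℓ) 1).1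
      (h.congr_fun (fun ℓ => by
        show ((ℓ+1 : ℕ) : ℝ) * phat ρ 0 (ℓ+1) = _
        simp only [phat, ha, hu]
        push_cast
        rw [div_pow, div_pow, one_pow]
        field_simp
        ring))
    have hv : ρ * u * (u / (1 - u) ^ 2) - u * (a / (1 - a) ^ 2) = 1 / ρ - ρ := by
      rw [h1a, h1u, ha, hu]; field_simp
    simpa [phat, hv] using h2
  -- E[X]
  have hEX : HasSum (fun k : ℕ => ∑' ℓ : ℕ, (k : ℝ) * phat ρ k ℓ) (2 * ρ / (1 - ρ)) := by
    have hsh := (geom_shift' hb0 hb1).mul_left ((1 - ρ) / (1 + ρ))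
    have hsh' : HasSum (fun k : ℕ => ∑' ℓ : ℕ, ((k+1 : ℕ) : ℝ) * phat ρ (k+1) ℓ)
        ((1 - ρ) / (1 + ρ) * (b / (1 - b) ^ 2)) := by
      refine hsh.congr_fun (fun k => ?_)
      rw [((row1 k).mul_left (((k+1 : ℕ) : ℝ))).tsum_eq]
      push_cast; ring
    have h2 := (hasSum_nat_add_iff
      (f := fun k : ℕ => ∑' ℓ : ℕ, (k : ℝ) * phat ρ k ℓ) 1).1 hsh'
    have hv : (1 - ρ) / (1 + ρ) * (b / (1 - b) ^ 2) = 2 * ρ / (1 - ρ) := by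
      rw [h1b, hb]; field_simp
    simp only [Finset.sum_range_one, Nat.cast_zero, zero_mul, tsum_zero, add_zero] at h2
    rwa [hv] at h2
  -- E[Y]
  have hEY : HasSum (fun k : ℕ => ∑' ℓ : ℕ, (ℓ : ℝ) * phat ρ k ℓ) ((ρ ^ 2 + 1) / ρ) := by
    have hsh := (geom_shift hb0 hb1).mul_left (1 - ρ)
    have hsh' : HasSum (fun k : ℕ => ∑' ℓ : ℕ, (ℓ : ℝ) * phat ρ (k+1) ℓ)
        ((1 - ρ) * (b / (1 - b))) := by
      refine hsh.congr_fun (fun k => ?_)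
      rw [(row1y k).tsum_eq]
    have h2 := (hasSum_nat_add_iff
      (f := fun k : ℕ => ∑' ℓ : ℕ, (ℓ : ℝ) * phat ρ k ℓ) 1).1 hsh'
    have hv : (1 - ρ) * (b / (1 - b)) + (1 / ρ - ρ) = (ρ ^ 2 + 1) / ρ := by
      rw [h1b, hb]; field_simp; ring
    simp only [Finset.sum_range_one] at h2
    rw [row0y.tsum_eq] at h2
    rwa [hv] at h2
  -- E[XY]
  have hEXY : HasSum (fun k : ℕ => ∑' ℓ : ℕ, (k : ℝ) * (ℓ : ℝ) * phat ρ k ℓ)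
      (2 * ρ * (1 + ρ) / (1 - ρ)) := by
    have hsh := (geom_shift' hb0 hb1).mul_left (1 - ρ)
    have hsh' : HasSum (fun k : ℕ => ∑' ℓ : ℕ, ((k+1 : ℕ) : ℝ) * (ℓ : ℝ) * phat ρ (k+1) ℓ)
        ((1 - ρ) * (b / (1 - b) ^ 2)) := by
      refine hsh.congr_fun (fun k => ?_)
      have heq : (fun ℓ : ℕ => ((k+1 : ℕ) : ℝ) * (ℓ : ℝ) * phat ρ (k+1) ℓ)
          = fun ℓ : ℕ => ((k+1 : ℕ) : ℝ) * ((ℓ : ℝ) * phat ρ (k+1) ℓ) :=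
        funext fun ℓ => by ring
      rw [heq, ((row1y k).mul_left (((k+1 : ℕ) : ℝ))).tsum_eq]
      push_cast; ring
    have h2 := (hasSum_nat_add_iff
      (f := fun k : ℕ => ∑' ℓ : ℕ, (k : ℝ) * (ℓ : ℝ) * phat ρ k ℓ) 1).1 hsh'
    have hv : (1 - ρ) * (b / (1 - b) ^ 2) = 2 * ρ * (1 + ρ) / (1 - ρ) := by
      rw [h1b, hb]; field_simp
    simp only [Finset.sum_range_one, Nat.cast_zero, zero_mul, tsum_zero, add_zero] at h2
    rwa [hv] at h2
  refine ⟨hEX.tsum_eq, hEY.tsum_eq, hEXY.tsum_eq, ?_⟩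
  rw [hEX.tsum_eq, hEY.tsum_eq, hEXY.tsum_eq]
  field_simp
  ring
end

section
/- For m1 ≥ m2 ≥ 1 and s ≥ 1, the s-th binomial moment of W_{m1,m2} satisfies E[C(W_{m1,m2}, s)] = (1/C(m1+m2,m1)) · Σ_{k=s-1}^{m2-1} C(k, s-1) 2^{k+1} C(m1+m2-k-1, m1). Equivalently, Σ_{k=s}^{m2} C(k,s)(2^k C(m1+m2-k, m1) - 2^{k+1} C(m1+m2-k-1, m1)) = Σ_{k=s-1}^{m2-1} C(k, s-1) 2^{k+1} C(m1+m2-k-1, m1). -/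
open Finset

theorem stmt_14 (m1 m2 s : ℕ) (h1 : 1 ≤ m2) (h2 : m2 ≤ m1) (hs : 1 ≤ s) :
    ∑ k ∈ Finset.Icc s m2,
        (Nat.choose k s : ℤ) *
          ((2 ^ k * Nat.choose (m1 + m2 - k) m1 : ℤ)
            - 2 ^ (k + 1) * Nat.choose (m1 + m2 - k - 1) m1)
      = ∑ k ∈ Finset.Icc (s - 1) (m2 - 1),
          (Nat.choose k (s - 1) : ℤ) * 2 ^ (k + 1) * Nat.choose (m1 + m2 - k - 1) m1 := by
  obtain ⟨t, rfl⟩ : ∃ t, s = t + 1 := ⟨s - 1, by omega⟩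
  obtain ⟨b, rfl⟩ : ∃ b, m2 = b + 1 := ⟨m2 - 1, by omega⟩
  simp only [Nat.add_sub_cancel]
  by_cases htb : t ≤ b
  · obtain ⟨d, rfl⟩ : ∃ d, b = t + d := ⟨b - t, by omega⟩
    have hm1 : 1 ≤ m1 := by omega
    set N := m1 + (t + d + 1) with hN
    set G : ℕ → ℤ := fun i =>
      (Nat.choose (t+1+i) (t+1) : ℤ) * 2^(t+1+i) * Nat.choose (N - (t+1+i)) m1 with hG
    set H : ℕ → ℤ := fun i =>
      (Nat.choose (t+i) t : ℤ) * 2^(t+i+1) * Nat.choose (N - (t+i) - 1) m1 with hH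
    have e1 : ∑ k ∈ Finset.Icc (t+1) (t+d+1),
        (Nat.choose k (t+1) : ℤ) *
          ((2 ^ k * Nat.choose (N - k) m1 : ℤ)
            - 2 ^ (k + 1) * Nat.choose (N - k - 1) m1)
        = ∑ i ∈ Finset.range (d+1), ((G i - G (i+1)) + (H (i+1) - H i) + H i) := by
      rw [← Finset.Ico_add_one_right_eq_Icc, Finset.sum_Ico_eq_sum_range]
      have hlen : t + d + 1 + 1 - (t + 1) = d + 1 := by omega
      rw [hlen]
      refine Finset.sum_congr rfl fun i _ => ?_
      have pascal : Nat.choose (t+1+(i+1)) (t+1)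
          = Nat.choose (t+1+i) t + Nat.choose (t+1+i) (t+1) := by
        exact Nat.choose_succ_succ (t+1+i) t
      have hsub1 : N - (t+1+(i+1)) = N - (t+1+i) - 1 := by omega
      have hsub2 : N - (t+(i+1)) - 1 = N - (t+1+i) - 1 := by omega
      simp only [hG, hH, pascal, hsub1, hsub2]
      push_cast
      ring_nf
    have e2 : ∑ k ∈ Finset.Icc t (t+d),
        (Nat.choose k t : ℤ) * 2 ^ (k + 1) * Nat.choose (N - k - 1) m1
        = ∑ i ∈ Finset.range (d+1), H i := by
      rw [← Finset.Ico_add_one_right_eq_Icc, Finset.sum_Ico_eq_sum_range]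
      have hlen : t + d + 1 - t = d + 1 := by omega
      rw [hlen]
    rw [e1, e2]
    rw [Finset.sum_add_distrib, Finset.sum_add_distrib,
      Finset.sum_range_sub' G, Finset.sum_range_sub H]
    have hG0 : G 0 = H 0 := by
      simp only [hG, hH]
      have h1' : N - (t + 1 + 0) = N - (t + 0) - 1 := by omega
      simp [h1', Nat.choose_self]
    have hGd : G (d+1) = 0 := by
      have : N - (t+1+(d+1)) = m1 - 1 := by omega
      simp [hG, this, Nat.choose_eq_zero_of_lt (by omega : m1 - 1 < m1)]
    have hHd : H (d+1) = 0 := by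
      have : N - (t+(d+1)) - 1 = m1 - 1 := by omega
      simp [hH, this, Nat.choose_eq_zero_of_lt (by omega : m1 - 1 < m1)]
    rw [hG0, hGd, hHd]
    ring
  · rw [Finset.Icc_eq_empty (by omega), Finset.Icc_eq_empty (by omega),
      Finset.sum_empty, Finset.sum_empty]
end
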